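/- arXiv:2310.15475 — 3 statements merged into one kernel-verified Lean document; each statement's English description precedes it below -/
import Mathlib

section
/- Let R be a commutative noetherian ring. The prime spectrum of R is a finite set if and only if R is semilocal (has only finitely many maximal ideals) and has Krull dimension at most one. -/
/-!
If `Spec R` is finite, prime avoidance gives, for each prime `p`, an element of `p` lying in
none of the finitely many primes strictly below `p`; then `p` is minimal over a principal
ideal, so it has height at most one by Krull's principal ideal theorem. Conversely, in
dimension at most one every prime is minimal or maximal, and a noetherian ring has only
finitely many minimal primes.
-/

variable {R : Type*}

lemma Ideal.exists_mem_minimalPrimes_span_singleton [CommRing R] [Finite (PrimeSpectrum R)]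
    (p : Ideal R) [p.IsPrime] : ∃ x : R, p ∈ (Ideal.span {x}).minimalPrimes := by
  let below : Set (PrimeSpectrum R) := {q | q.asIdeal < p}
  have hnot : ¬ (p : Set R) ⊆ ⋃ q ∈ below, q.asIdeal := by
    rw [Ideal.subset_union_prime_finite below.toFinite ⟨p, ‹_›⟩ ⟨p, ‹_›⟩
      fun q _ _ _ ↦ q.isPrime]
    rintro ⟨q, hqp, hpq⟩
    exact hqp.not_ge hpq
  obtain ⟨x, hxp, hx⟩ := Set.not_subset.mp hnot
  simp only [Set.mem_iUnion, not_exists] at hx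
  refine ⟨x, ⟨‹_›, (Ideal.span_singleton_le_iff_mem _).mpr hxp⟩, ?_⟩
  rintro q ⟨hq, hxq⟩ hqp
  by_contra hpq
  exact hx ⟨q, hq⟩ (lt_of_le_not_ge hqp hpq) (hxq (Ideal.mem_span_singleton_self x))

lemma Ideal.height_le_one_of_finite_primeSpectrum [CommRing R] [IsNoetherianRing R]
    [Finite (PrimeSpectrum R)] (p : Ideal R) [p.IsPrime] : p.height ≤ 1 := by
  obtain ⟨x, hx⟩ := p.exists_mem_minimalPrimes_span_singleton
  exact Ideal.height_le_one_of_isPrincipal_of_mem_minimalPrimes _ p hx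

lemma ringKrullDim_le_one_of_finite_primeSpectrum [CommRing R] [IsNoetherianRing R]
    [Finite (PrimeSpectrum R)] : ringKrullDim R ≤ 1 :=
  (ringKrullDim_le_iff_height_le 1).mpr fun p _ ↦ by
    exact_mod_cast p.height_le_one_of_finite_primeSpectrum

lemma finite_primeSpectrum_of_ringKrullDim_le_one [CommSemiring R] [IsNoetherianRing R]
    [Finite (MaximalSpectrum R)] (h : ringKrullDim R ≤ 1) : Finite (PrimeSpectrum R) := by
  have hmax : {x : PrimeSpectrum R | IsMax x}.Finite :=
    (Set.finite_range MaximalSpectrum.toPrimeSpectrum).subset fun x hx ↦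
      ⟨⟨x.asIdeal, PrimeSpectrum.isMax_iff.mp hx⟩, rfl⟩
  rw [← Set.finite_univ_iff]
  exact ((PrimeSpectrum.finite_setOfPred_isMin R).union hmax).subset fun x _ ↦
    Order.krullDim_le_one_iff.mp h x

/-- For a commutative noetherian ring `R`, the prime spectrum of `R` is a
finite set if and only if `R` is semilocal (finitely many maximal ideals) and has Krull
dimension at most one. -/
theorem stmt_0 (R : Type) [CommRing R] [IsNoetherianRing R] :
    Finite (PrimeSpectrum R) ↔ Finite (MaximalSpectrum R) ∧ ringKrullDim R ≤ 1 :=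
  ⟨fun _ ↦ ⟨.of_injective _ MaximalSpectrum.toPrimeSpectrum_injective,
      ringKrullDim_le_one_of_finite_primeSpectrum⟩,
    fun ⟨_, h⟩ ↦ finite_primeSpectrum_of_ringKrullDim_le_one h⟩
end

section
/- Let R be a commutative noetherian ring of Krull dimension at least two. Then there exist infinitely many prime ideals of R of height one. -/
/-!
A prime `q` of height at least two is the union of the primes of height at most one below it:
by Krull's principal ideal theorem every `x ∈ q` lies in a prime minimal over `(x)` inside `q`,
and such a prime has height at most one. Prime avoidance forbids `q` being covered by finitely
many primes not containing it, and a noetherian ring has only finitely many minimal primes, so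
infinitely many of these primes have height exactly one.
-/

open Order

namespace PrimeSpectrum

variable {R : Type*} [CommRing R] [IsNoetherianRing R]

lemma finite_setOf_height_eq_zero : {p : PrimeSpectrum R | height p = 0}.Finite := by
  refine ((minimalPrimes.finite_of_isNoetherianRing R).preimage
    fun _ _ _ _ h ↦ PrimeSpectrum.ext h).subset ?_
  intro p hp
  rwa [Set.mem_ofPred_eq, ← height_eq_orderHeight, Ideal.height_eq_zero_iff] at hp

lemma exists_le_height_le_one_of_mem {q : PrimeSpectrum R} {x : R} (hx : x ∈ q.asIdeal) :
    ∃ p ≤ q, height p ≤ 1 ∧ x ∈ p.asIdeal := by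
  obtain ⟨p, hp, hpq⟩ :=
    Ideal.exists_minimalPrimes_le ((Ideal.span_singleton_le_iff_mem _).mpr hx)
  refine ⟨⟨p, hp.isPrime⟩, hpq, ?_, hp.1.2 (Ideal.mem_span_singleton_self x)⟩
  rw [← height_eq_orderHeight]
  exact Ideal.height_le_one_of_isPrincipal_of_mem_minimalPrimes _ p hp

theorem infinite_setOf_le_and_height_eq_one {q : PrimeSpectrum R} (hq : 2 ≤ height q) :
    {p | p ≤ q ∧ height p = 1}.Infinite := by
  intro hfin
  set T := (finite_setOf_height_eq_zero.union hfin).toFinset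
  have hT : ∀ p ∈ T, height p ≤ 1 := by
    intro p hp
    rcases (Set.Finite.mem_toFinset _).mp hp with h0 | ⟨-, h1⟩
    · exact h0.symm ▸ zero_le_one
    · exact h1.le
  have hcover : (q.asIdeal : Set R) ⊆ ⋃ p ∈ (T : Set (PrimeSpectrum R)), (p.asIdeal : Set R) := by
    intro x hx
    obtain ⟨p, hpq, hp, hxp⟩ := exists_le_height_le_one_of_mem hx
    refine Set.mem_biUnion ((Set.Finite.mem_toFinset _).mpr ?_) hxp
    rcases hp.lt_or_eq with h0 | h1
    · exact Or.inl (Order.lt_one_iff.mp h0)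
    · exact Or.inr ⟨hpq, h1⟩
  obtain ⟨p, hpT, hqp⟩ := (Ideal.subset_union_prime q q fun p _ _ _ ↦ p.isPrime).mp hcover
  have : (2 : ℕ∞) ≤ 1 := hq.trans ((height_mono (show q ≤ p from hqp)).trans (hT p hpT))
  exact absurd this (by norm_num)

end PrimeSpectrum

/-- A commutative noetherian ring of Krull dimension at least two has
infinitely many prime ideals of height one. -/
theorem stmt_1 (R : Type) [CommRing R] [IsNoetherianRing R]
    (h : 2 ≤ ringKrullDim R) :
    {p : PrimeSpectrum R | Order.height p = 1}.Infinite := by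
  obtain ⟨l, hl⟩ := (le_krullDim_iff (n := 2)).mp h
  have hq : 2 ≤ height l.last := by
    simpa [hl] using length_le_height_last (p := l)
  exact (PrimeSpectrum.infinite_setOf_le_and_height_eq_one hq).mono fun _ hp ↦ hp.2
end

section
/- Let R be a commutative noetherian semilocal ring of Krull dimension at most one. Then there exists a finitely generated R-module G such that every finitely generated R-module belongs to the smallest subcategory of finitely generated R-modules containing G and closed under direct summands and extensions. Concretely, G = ⊕_{p ∈ Spec R} R/p works. -/
open DirectSum

/-- The extension closure `ext G`: the smallest class of (finitely generated) `R`-modules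
containing `G` and closed under direct summands and extensions. -/
inductive ExtClosure.{u_1, u_2} (R : Type) [CommRing R] (G : ModuleCat.{u_1} R) : ModuleCat.{u_1} R → Prop
  | base : ExtClosure R G G
  | summand {M : ModuleCat R} (N : ModuleCat.{u_1} R) (N' : ModuleCat.{u_2} R) (e : M ≃ₗ[R] N × N') :
      ExtClosure R G M → ExtClosure R G N
  | extension {L M N : ModuleCat R} (f : L →ₗ[R] M) (g : M →ₗ[R] N)
      (hf : Function.Injective f) (hg : Function.Surjective g) (hfg : Function.Exact f g) :
      ExtClosure R G L → ExtClosure R G N → ExtClosure R G M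

/-
In dimension at most one every prime is minimal or maximal, so a noetherian semilocal ring of
dimension `≤ 1` has only finitely many primes and `⨁ p, R ⧸ p` is finitely generated. Each `R ⧸ p`
is a direct summand of it, and every finitely generated module over a noetherian ring has a
filtration whose subquotients are of the form `R ⧸ p` with `p` prime; closure under extensions
then gives everything.
-/

universe v

namespace ExtClosure

variable {R : Type} [CommRing R] {G : ModuleCat.{0} R}

theorem of_retract {M N : ModuleCat.{0} R} (s : N →ₗ[R] M) (r : M →ₗ[R] N)
    (hrs : r ∘ₗ s = LinearMap.id) (hM : ExtClosure.{0, v} R G M) : ExtClosure.{0, v} R G N := by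
  obtain ⟨e, -⟩ := (LinearMap.exact_map_mkQ_range s).splitInjectiveEquiv
    (Submodule.mkQ_surjective _) ⟨r, hrs⟩
  exact summand N (ModuleCat.of R (ULift.{v} (M ⧸ LinearMap.range s)))
    (e.trans (LinearEquiv.prodCongr (LinearEquiv.refl R N) ULift.moduleEquiv.symm)) hM

theorem of_linearEquiv {M N : ModuleCat.{0} R} (e : M ≃ₗ[R] N) (hM : ExtClosure.{0, v} R G M) :
    ExtClosure.{0, v} R G N :=
  of_retract e.symm.toLinearMap e.toLinearMap (by ext; simp) hM

theorem of_subsingleton (Z : ModuleCat.{0} R) [Subsingleton Z] : ExtClosure.{0, v} R G Z :=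
  of_retract 0 0 (Subsingleton.elim _ _) base

theorem of_directSum_component {ι : Type} [DecidableEq ι] (F : ι → Type)
    [∀ i, AddCommGroup (F i)] [∀ i, Module R (F i)]
    (h : ExtClosure.{0, v} R G (ModuleCat.of R (⨁ i, F i))) (i : ι) :
    ExtClosure.{0, v} R G (ModuleCat.of R (F i)) :=
  of_retract (M := ModuleCat.of R (⨁ i, F i)) (N := ModuleCat.of R (F i))
    (DirectSum.lof R ι F i) (DirectSum.component R ι F i) (by ext; simp) h

theorem of_finite [IsNoetherianRing R]
    (hprime : ∀ p : PrimeSpectrum R, ExtClosure.{0, v} R G (ModuleCat.of R (R ⧸ p.asIdeal)))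
    (M : Type) [AddCommGroup M] [Module R M] (hM : Module.Finite R M) :
    ExtClosure.{0, v} R G (ModuleCat.of R M) := by
  induction hM using IsNoetherianRing.induction_on_isQuotientEquivQuotientPrime R with
  | subsingleton N => exact of_subsingleton (ModuleCat.of R N)
  | quotient N p e => exact of_linearEquiv (M := ModuleCat.of R (R ⧸ p.asIdeal)) e.symm (hprime p)
  | exact N₁ N₂ N₃ f g hf hg hfg h₁ h₃ => exact extension f g hf hg hfg h₁ h₃

end ExtClosure

theorem PrimeSpectrum.finite_of_krullDimLE_one (R : Type*) [CommRing R] [IsNoetherianRing R]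
    [Finite (MaximalSpectrum R)] [Ring.KrullDimLE 1 R] : Finite (PrimeSpectrum R) := by
  have hmin : (PrimeSpectrum.asIdeal ⁻¹' minimalPrimes R).Finite :=
    (minimalPrimes.finite_of_isNoetherianRing R).preimage fun _ _ _ _ => PrimeSpectrum.ext
  refine Set.finite_univ_iff.mp <|
    (hmin.union (Set.finite_range MaximalSpectrum.toPrimeSpectrum)).subset fun p _ => ?_
  rcases Ring.krullDimLE_one_iff.mp ‹_› p.asIdeal p.isPrime with hp | hp
  · exact Or.inl hp
  · exact Or.inr ⟨⟨p.asIdeal, hp⟩, rfl⟩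

/-- If `R` is a commutative noetherian semilocal ring of Krull dimension at
most one, then `G = ⨁_{p ∈ Spec R} R/p` is a finitely generated `R`-module such that every
finitely generated `R`-module lies in the extension closure of `G`. -/
theorem stmt_4 (R : Type) [CommRing R] [IsNoetherianRing R]
    (hsl : Finite (MaximalSpectrum R)) (hdim : ringKrullDim R ≤ 1) :
    Module.Finite R (⨁ p : PrimeSpectrum R, R ⧸ p.asIdeal) ∧
    ∀ M : ModuleCat R, Module.Finite R M →
      ExtClosure R (ModuleCat.of R (⨁ p : PrimeSpectrum R, R ⧸ p.asIdeal)) M := by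
  classical
  have : Ring.KrullDimLE 1 R := Ring.krullDimLE_iff.mpr (mod_cast hdim)
  have : Finite (PrimeSpectrum R) := PrimeSpectrum.finite_of_krullDimLE_one R
  exact ⟨inferInstance, fun M => ExtClosure.of_finite
    (ExtClosure.of_directSum_component (fun p : PrimeSpectrum R => R ⧸ p.asIdeal) .base) M⟩
end
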